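/- Let W be an N×N weight matrix on ℝ satisfying W(x) = W(−x) for almost every x, with monic orthogonal polynomials {H_n}_{n≥0}. Let D = Σ_{j=0}^s (d^j/dx^j) F_j(x) be a differential operator with N×N matrix polynomial coefficients F_j such that H_n·D = Λ_n H_n for all n ≥ 0 and some constant matrices Λ_n. Then each coefficient satisfies F_j(−x) = (−1)^j F_j(x); that is, F_j is an even polynomial when j is even and an odd polynomial when j is odd. -/

import Mathlib

open MeasureTheory Polynomial Set Matrix
open scoped ComplexOrder

noncomputable section

/-- Matrix polynomials: `N × N` matrices with entries in `ℂ[X]`. -/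
abbrev MatPoly (N : ℕ) := Matrix (Fin N) (Fin N) (Polynomial ℂ)

/-- Evaluation of a matrix polynomial at a real point. -/
def evalM {N : ℕ} (P : MatPoly N) (x : ℝ) : Matrix (Fin N) (Fin N) ℂ :=
  fun i j => (P i j).eval (x : ℂ)

/-- The `k`-th matrix coefficient of a matrix polynomial. -/
def coeffM {N : ℕ} (P : MatPoly N) (k : ℕ) : Matrix (Fin N) (Fin N) ℂ :=
  fun i j => (P i j).coeff k

/-- Entrywise derivative of a matrix polynomial. -/
def derivM {N : ℕ} (P : MatPoly N) : MatPoly N :=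
  fun i j => Polynomial.derivative (P i j)

/-- Entrywise iterated derivative. -/
def iterDerivM {N : ℕ} (k : ℕ) (P : MatPoly N) : MatPoly N :=
  fun i j => (fun q => Polynomial.derivative q)^[k] (P i j)

/-- Constant matrix polynomial. -/
def constM {N : ℕ} (A : Matrix (Fin N) (Fin N) ℂ) : MatPoly N :=
  A.map Polynomial.C

/-- Entrywise multiplication by the scalar polynomial `X`. -/
def XmulM {N : ℕ} (P : MatPoly N) : MatPoly N :=
  fun i j => Polynomial.X * P i j

/-- Composition with the polynomial `X ^ 2` (the substitution `x ↦ x²`). -/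
def compSqM {N : ℕ} (P : MatPoly N) : MatPoly N :=
  fun i j => (P i j).comp (Polynomial.X ^ 2)

/-- Composition with `-X` (the substitution `x ↦ -x`). -/
def reflectM {N : ℕ} (P : MatPoly N) : MatPoly N :=
  fun i j => (P i j).comp (-Polynomial.X)

/-- Right action of the matrix differential operator `D = ∑_{j=0}^s (d^j/dx^j) F j`
on a matrix polynomial: `(P · D)(x) = ∑_{j=0}^s P^{(j)}(x) F_j(x)`. -/
def applyOp {N : ℕ} (s : ℕ) (F : ℕ → MatPoly N) (P : MatPoly N) : MatPoly N :=
  ∑ j ∈ Finset.range (s + 1), iterDerivM j P * F j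

/-- Entrywise integral of a matrix-valued function over a set. -/
def matInt {N : ℕ} (I : Set ℝ) (f : ℝ → Matrix (Fin N) (Fin N) ℂ) :
    Matrix (Fin N) (Fin N) ℂ :=
  fun i j => ∫ x in I, f x i j

/-- The matrix inner product `⟨P, Q⟩_W = ∫_I P(x) W(x) Q(x)^* dx`. -/
def innerW {N : ℕ} (I : Set ℝ) (W : ℝ → Matrix (Fin N) (Fin N) ℂ)
    (P Q : MatPoly N) : Matrix (Fin N) (Fin N) ℂ :=
  matInt I (fun x => evalM P x * W x * (evalM Q x)ᴴ)

/-- `W` is a weight matrix on the set `I ⊆ ℝ`: integrable on `I`, positive definite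
almost everywhere on `I`, and with all moments finite. -/
structure IsWeight {N : ℕ} (I : Set ℝ) (W : ℝ → Matrix (Fin N) (Fin N) ℂ) : Prop where
  integrable : ∀ i j, IntegrableOn (fun x => W x i j) I
  posdef : ∀ᵐ x ∂(volume.restrict I), (W x).PosDef
  moments : ∀ (n : ℕ) (i j), IntegrableOn (fun (x : ℝ) => (x : ℂ) ^ n * W x i j) I

/-- `P` is monic of degree exactly `n` (leading coefficient the identity matrix). -/
def IsMonicDeg {N : ℕ} (P : MatPoly N) (n : ℕ) : Prop :=
  coeffM P n = 1 ∧ ∀ k, n < k → coeffM P k = 0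

/-- `P` is the sequence of monic orthogonal polynomials of the weight `W` on `I`. -/
def MonicOPS {N : ℕ} (I : Set ℝ) (W : ℝ → Matrix (Fin N) (Fin N) ℂ)
    (P : ℕ → MatPoly N) : Prop :=
  (∀ n, IsMonicDeg (P n) n) ∧ ∀ n m, n ≠ m → innerW I W (P n) (P m) = 0

/-- A (not necessarily monic) sequence of orthogonal polynomials for `W` on `I`:
degree `n` with invertible leading coefficient, pairwise orthogonal. -/
def IsOPS {N : ℕ} (I : Set ℝ) (W : ℝ → Matrix (Fin N) (Fin N) ℂ)
    (Q : ℕ → MatPoly N) : Prop :=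
  (∀ n, IsUnit (coeffM (Q n) n) ∧ ∀ k, n < k → coeffM (Q n) k = 0) ∧
  ∀ n m, n ≠ m → innerW I W (Q n) (Q m) = 0

/-- The Laguerre-type weight `V(y) = y^{-1/2} W(√y)` on `(0,∞)`. -/
def VWeight {N : ℕ} (W : ℝ → Matrix (Fin N) (Fin N) ℂ) :
    ℝ → Matrix (Fin N) (Fin N) ℂ :=
  fun y => (Real.sqrt y)⁻¹ • W (Real.sqrt y)

/-- The Laguerre-type weight `U(y) = y^{1/2} W(√y)` on `(0,∞)`. -/
def UWeight {N : ℕ} (W : ℝ → Matrix (Fin N) (Fin N) ℂ) :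
    ℝ → Matrix (Fin N) (Fin N) ℂ :=
  fun y => Real.sqrt y • W (Real.sqrt y)

/-- `p` is the sequence of monic scalar orthogonal polynomials of the scalar
weight `w` on `I`. -/
def ScalarMonicOPS (I : Set ℝ) (w : ℝ → ℝ) (p : ℕ → Polynomial ℝ) : Prop :=
  (∀ n, (p n).Monic ∧ (p n).natDegree = n) ∧
  ∀ n m, n ≠ m → ∫ x in I, (p n).eval x * (p m).eval x * w x = 0


/-!
For an even weight the reflection `x ↦ -x` preserves `⟨·,·⟩_W`, so `(-1)^n H_n(-x)` is again
a monic orthogonal sequence; monic orthogonal polynomials are unique because `⟨P, P⟩_W = 0`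
forces `P = 0`, hence `H_n(-x) = (-1)^n H_n(x)`. Reflecting the eigenvalue equation then shows
that the operator with coefficients `(-1)^j F_j(-x)` acts on every `H_n` as `D` does. Since
`H_n^{(n)} = n!` and `H_n^{(k)} = 0` for `k > n`, the action on `H_0, H_1, …` determines
`F_0, F_1, …` one after the other.
-/

namespace Polynomial

lemma iterate_derivative_comp_neg_X (p : ℂ[X]) (k : ℕ) :
    (derivative^[k] p).comp (-X) = (-1 : ℂ) ^ k • derivative^[k] (p.comp (-X)) := by
  induction k with
  | zero => simp
  | succ k ih =>
    have h := congrArg derivative ih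
    rw [derivative_comp, derivative_smul] at h
    simp only [derivative_neg, derivative_X] at h
    rw [Function.iterate_succ_apply', Function.iterate_succ_apply', pow_succ', mul_smul, ← h]
    simp

lemma iterate_derivative_eq_C_of_natDegree_le {p : ℂ[X]} {n : ℕ} (h : p.natDegree ≤ n) :
    derivative^[n] p = C ((n.factorial : ℂ) * p.coeff n) := by
  ext m
  rw [coeff_iterate_derivative, coeff_C]
  rcases Nat.eq_zero_or_pos m with rfl | hm
  · simp [Nat.descFactorial_self]
  · simp [coeff_eq_zero_of_natDegree_lt (show p.natDegree < m + n by omega), hm.ne']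

lemma star_eval_ofReal (q : ℂ[X]) (x : ℝ) :
    star (q.eval (x : ℂ)) = (q.map (starRingEnd ℂ)).eval (x : ℂ) := by
  simp [eval_eq_sum_range]

lemma eq_zero_of_ae_eval_eq_zero {μ : Measure ℝ} [NullSingletonClass μ] (hμ : μ ≠ 0)
    {q : ℂ[X]} (h : ∀ᵐ x : ℝ ∂μ, q.eval (x : ℂ) = 0) : q = 0 := by
  by_contra hq
  have hroots : {x : ℝ | q.eval (x : ℂ) = 0}.Finite :=
    (finite_setOfPred_isRoot hq).preimage Complex.ofReal_injective.injOn
  have hne : ∀ᵐ x : ℝ ∂μ, q.eval (x : ℂ) ≠ 0 :=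
    measure_eq_zero_iff_ae_notMem.mp (hroots.measure_zero μ)
  have hfalse : ∀ᵐ _x : ℝ ∂μ, False := by filter_upwards [h, hne] with x using absurd
  exact hμ (ae_eq_bot.mp (Filter.eventually_false_iff_eq_bot.mp hfalse))

end Polynomial

lemma Matrix.PosDef.re_mul_mul_conjTranspose_apply_self_pos {n : Type*} [Fintype n]
    {A B : Matrix n n ℂ} (hB : B.PosDef) {i : n} (hA : A i ≠ 0) :
    0 < ((A * B * Aᴴ) i i).re := by
  have hv : star (A i) ≠ 0 := by simpa using hA
  have hpos := hB.dotProduct_mulVec_pos hv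
  rw [star_star] at hpos
  rw [Matrix.mul_mul_apply]
  exact (Complex.pos_iff.mp hpos).1

lemma neg_one_pow_smul_eq_iff {R M : Type*} [Ring R] [AddCommGroup M] [Module R M] (n : ℕ)
    {x y : M} : (-1 : R) ^ n • x = y ↔ x = (-1 : R) ^ n • y := by
  constructor <;> rintro rfl <;>
    rw [smul_smul, ← pow_add, ← two_mul, pow_mul, neg_one_sq, one_pow, one_smul]

section MatrixPolynomial

variable {N : ℕ}

lemma coeffM_sub (P Q : MatPoly N) (k : ℕ) :
    coeffM (P - Q) k = coeffM P k - coeffM Q k := by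
  ext i j; simp [coeffM]

lemma coeffM_smul (c : ℂ) (P : MatPoly N) (k : ℕ) :
    coeffM (c • P) k = c • coeffM P k := by
  ext i j; simp [coeffM]

lemma coeffM_constM_mul (A : Matrix (Fin N) (Fin N) ℂ) (P : MatPoly N) (k : ℕ) :
    coeffM (constM A * P) k = A * coeffM P k := by
  ext i j; simp [coeffM, constM, Matrix.mul_apply]

lemma eq_zero_of_coeffM_eq_zero {P : MatPoly N} (h : ∀ k, coeffM P k = 0) : P = 0 := by
  ext i j k; simpa [coeffM] using congrFun₂ (h k) i j

lemma reflectM_eq_mapMatrix (P : MatPoly N) :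
    reflectM P = (compRingHom (-X : ℂ[X])).mapMatrix P := rfl

lemma reflectM_mul (P Q : MatPoly N) : reflectM (P * Q) = reflectM P * reflectM Q := by
  simp only [reflectM_eq_mapMatrix, map_mul]

lemma reflectM_sum {ι : Type*} (t : Finset ι) (P : ι → MatPoly N) :
    reflectM (∑ m ∈ t, P m) = ∑ m ∈ t, reflectM (P m) := by
  simp only [reflectM_eq_mapMatrix, map_sum]

lemma reflectM_constM (A : Matrix (Fin N) (Fin N) ℂ) : reflectM (constM A) = constM A := by
  ext i j; simp [reflectM, constM]

lemma coeffM_reflectM (P : MatPoly N) (k : ℕ) :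
    coeffM (reflectM P) k = (-1 : ℂ) ^ k • coeffM P k := by
  funext i j
  have hX : (-X : ℂ[X]) = C (-1) * X := by simp
  simp only [coeffM, reflectM, hX, comp_C_mul_X_coeff, Matrix.smul_apply, smul_eq_mul]
  ring

lemma iterDerivM_smul (c : ℂ) (k : ℕ) (P : MatPoly N) :
    iterDerivM k (c • P) = c • iterDerivM k P := by
  ext i j : 1; simp [iterDerivM, iterate_derivative_smul]

lemma reflectM_iterDerivM (k : ℕ) (P : MatPoly N) :
    reflectM (iterDerivM k P) = (-1 : ℂ) ^ k • iterDerivM k (reflectM P) := by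
  ext i j : 1; simp [reflectM, iterDerivM, iterate_derivative_comp_neg_X]

lemma evalM_eq_mapMatrix (P : MatPoly N) (x : ℝ) :
    evalM P x = (evalRingHom (x : ℂ)).mapMatrix P := rfl

lemma evalM_mul (P Q : MatPoly N) (x : ℝ) : evalM (P * Q) x = evalM P x * evalM Q x := by
  simp only [evalM_eq_mapMatrix, map_mul]

lemma evalM_sub (P Q : MatPoly N) (x : ℝ) : evalM (P - Q) x = evalM P x - evalM Q x := by
  simp only [evalM_eq_mapMatrix, map_sub]

lemma evalM_sum {ι : Type*} (t : Finset ι) (P : ι → MatPoly N) (x : ℝ) :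
    evalM (∑ m ∈ t, P m) x = ∑ m ∈ t, evalM (P m) x := by
  simp only [evalM_eq_mapMatrix, map_sum]

lemma evalM_smul (c : ℂ) (P : MatPoly N) (x : ℝ) : evalM (c • P) x = c • evalM P x := by
  funext i j; simp [evalM]

lemma evalM_constM (A : Matrix (Fin N) (Fin N) ℂ) (x : ℝ) : evalM (constM A) x = A := by
  funext i j; simp [evalM, constM]

lemma evalM_reflectM (P : MatPoly N) (x : ℝ) : evalM (reflectM P) x = evalM P (-x) := by
  funext i j; simp [evalM, reflectM]

lemma natDegree_le_of_coeffM_eq_zero {P : MatPoly N} {n : ℕ} (h : ∀ k, n < k → coeffM P k = 0)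
    (i j : Fin N) : (P i j).natDegree ≤ n :=
  natDegree_le_iff_coeff_eq_zero.mpr fun k hk => congrFun₂ (h k hk) i j

lemma iterDerivM_eq_zero {P : MatPoly N} {n k : ℕ} (h : ∀ m, n < m → coeffM P m = 0)
    (hk : n < k) : iterDerivM k P = 0 := by
  funext i j
  exact iterate_derivative_eq_zero ((natDegree_le_of_coeffM_eq_zero h i j).trans_lt hk)

lemma IsMonicDeg.iterDerivM_self {P : MatPoly N} {n : ℕ} (hP : IsMonicDeg P n) :
    iterDerivM n P = (n.factorial : ℂ) • 1 := by
  funext i j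
  rw [iterDerivM,
    iterate_derivative_eq_C_of_natDegree_le (natDegree_le_of_coeffM_eq_zero hP.2 i j)]
  have h1 := congrFun₂ hP.1 i j
  simp only [coeffM] at h1
  rw [h1, Matrix.smul_apply, Matrix.one_apply, Matrix.one_apply]
  split_ifs <;> simp [smul_eq_C_mul]

lemma applyOp_smul (s : ℕ) (F : ℕ → MatPoly N) (c : ℂ) (P : MatPoly N) :
    applyOp s F (c • P) = c • applyOp s F P := by
  simp only [applyOp, iterDerivM_smul, smul_mul_assoc, Finset.smul_sum]

lemma applyOp_sub (s : ℕ) (F G : ℕ → MatPoly N) (P : MatPoly N) :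
    applyOp s (F - G) P = applyOp s F P - applyOp s G P := by
  simp only [applyOp, Pi.sub_apply, mul_sub, Finset.sum_sub_distrib]

lemma reflectM_applyOp (s : ℕ) (F : ℕ → MatPoly N) (P : MatPoly N) :
    reflectM (applyOp s F P) =
      applyOp s (fun j => (-1 : ℂ) ^ j • reflectM (F j)) (reflectM P) := by
  simp only [applyOp, reflectM_sum, reflectM_mul, reflectM_iterDerivM, mul_smul_comm,
    smul_mul_assoc]

lemma eq_zero_of_applyOp_monic_eq_zero {s : ℕ} {H : ℕ → MatPoly N}
    (hH : ∀ n, IsMonicDeg (H n) n) {G : ℕ → MatPoly N} (hG : ∀ n, applyOp s G (H n) = 0) :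
    ∀ k ≤ s, G k = 0 := by
  intro k
  induction k using Nat.strong_induction_on with
  | _ k ih =>
    intro hk
    have hGk : applyOp s G (H k) = (k.factorial : ℂ) • G k := by
      rw [applyOp, Finset.sum_eq_single_of_mem k (Finset.mem_range.mpr (Nat.lt_succ_of_le hk)),
        (hH k).iterDerivM_self, smul_mul_assoc, one_mul]
      intro j _ hjk
      rcases lt_or_gt_of_ne hjk with hlt | hgt
      · rw [ih j hlt (hlt.le.trans hk), mul_zero]
      · rw [iterDerivM_eq_zero (hH k).2 hgt, zero_mul]
    rw [hG k] at hGk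
    exact (smul_eq_zero.mp hGk.symm).resolve_left (Nat.cast_ne_zero.mpr k.factorial_ne_zero)

lemma eq_of_applyOp_monic_eq {s : ℕ} {H : ℕ → MatPoly N} (hH : ∀ n, IsMonicDeg (H n) n)
    {F G : ℕ → MatPoly N} (hFG : ∀ n, applyOp s F (H n) = applyOp s G (H n)) :
    ∀ j ≤ s, F j = G j := fun j hj =>
  sub_eq_zero.mp (eq_zero_of_applyOp_monic_eq_zero (G := F - G) hH
    (fun n => by rw [applyOp_sub, hFG n, sub_self]) j hj)

section Weight

variable {I : Set ℝ} {W : ℝ → Matrix (Fin N) (Fin N) ℂ}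

lemma IsWeight.integrableOn_eval_mul (hW : IsWeight I W) (r : ℂ[X]) (k l : Fin N) :
    IntegrableOn (fun x : ℝ => r.eval (x : ℂ) * W x k l) I := by
  simp_rw [eval_eq_sum_range, Finset.sum_mul, mul_assoc]
  exact integrable_finsetSum _ fun n _ => (hW.moments n k l).const_mul _

lemma IsWeight.integrableOn_innerW_apply (hW : IsWeight I W) (P Q : MatPoly N) (i j : Fin N) :
    IntegrableOn (fun x => (evalM P x * W x * (evalM Q x)ᴴ) i j) I := by
  have hsum : (fun x => (evalM P x * W x * (evalM Q x)ᴴ) i j) = fun x : ℝ => ∑ l, ∑ k,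
      (P i k * (Q j l).map (starRingEnd ℂ)).eval (x : ℂ) * W x k l := by
    funext x
    simp only [Matrix.mul_apply, Matrix.conjTranspose_apply, evalM, Finset.sum_mul, eval_mul,
      ← star_eval_ofReal]
    refine Finset.sum_congr rfl fun l _ => Finset.sum_congr rfl fun k _ => by ring
  rw [hsum]
  exact integrable_finsetSum _ fun l _ => integrable_finsetSum _ fun k _ =>
    hW.integrableOn_eval_mul _ k l

lemma innerW_sub_left (hW : IsWeight I W) (P Q R : MatPoly N) :
    innerW I W (P - Q) R = innerW I W P R - innerW I W Q R := by
  funext i j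
  simp only [innerW, matInt, Matrix.sub_apply]
  rw [← integral_sub (hW.integrableOn_innerW_apply P R i j)
    (hW.integrableOn_innerW_apply Q R i j)]
  simp only [evalM_sub, Matrix.sub_mul, Matrix.sub_apply]

lemma innerW_sum_right (hW : IsWeight I W) (P : MatPoly N) {ι : Type*} (t : Finset ι)
    (Q : ι → MatPoly N) :
    innerW I W P (∑ m ∈ t, Q m) = ∑ m ∈ t, innerW I W P (Q m) := by
  funext i j
  simp only [innerW, matInt, Matrix.sum_apply]
  rw [← integral_finsetSum _ fun m _ => hW.integrableOn_innerW_apply P (Q m) i j]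
  simp only [evalM_sum, Matrix.conjTranspose_sum, Matrix.mul_sum, Matrix.sum_apply]

lemma innerW_constM_mul_right (hW : IsWeight I W) (P Q : MatPoly N)
    (A : Matrix (Fin N) (Fin N) ℂ) : innerW I W P (constM A * Q) = innerW I W P Q * Aᴴ := by
  funext i j
  rw [Matrix.mul_apply]
  simp only [innerW, matInt, ← integral_mul_const]
  rw [← integral_finsetSum _ fun l _ => (hW.integrableOn_innerW_apply P Q i l).mul_const _]
  simp only [evalM_mul, evalM_constM, Matrix.conjTranspose_mul, ← Matrix.mul_assoc,
    Matrix.mul_apply (N := Aᴴ)]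

lemma innerW_smul_left (c : ℂ) (P Q : MatPoly N) :
    innerW I W (c • P) Q = c • innerW I W P Q := by
  funext i j
  simp only [innerW, matInt, Matrix.smul_apply, ← integral_smul, evalM_smul, Matrix.smul_mul]

lemma innerW_smul_right (c : ℂ) (P Q : MatPoly N) :
    innerW I W P (c • Q) = star c • innerW I W P Q := by
  funext i j
  simp only [innerW, matInt, Matrix.smul_apply, ← integral_smul, evalM_smul,
    Matrix.conjTranspose_smul, Matrix.mul_smul]

lemma innerW_self_eq_zero (hW : IsWeight I W) (hI : volume I ≠ 0) {P : MatPoly N}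
    (h : innerW I W P P = 0) : P = 0 := by
  funext i k
  let g : ℝ → ℝ := fun x => ((evalM P x * W x * (evalM P x)ᴴ) i i).re
  have hg_int : ∫ x in I, g x = 0 := by
    refine (integral_re (hW.integrableOn_innerW_apply P P i i)).trans ?_
    simpa [innerW, matInt] using congrArg Complex.re (congrFun₂ h i i)
  have hg_nonneg : 0 ≤ᵐ[volume.restrict I] g := by
    filter_upwards [hW.posdef] with x hx
    by_cases hrow : evalM P x i = 0
    · simp [g, Matrix.mul_mul_apply, hrow]
    · exact (hx.re_mul_mul_conjTranspose_apply_self_pos hrow).le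
  have hg_zero := (integral_eq_zero_iff_of_nonneg_ae hg_nonneg
    (hW.integrableOn_innerW_apply P P i i).re).mp hg_int
  have hrow : ∀ᵐ x : ℝ ∂volume.restrict I, (P i k).eval (x : ℂ) = 0 := by
    filter_upwards [hW.posdef, hg_zero] with x hx hgx
    by_contra hne
    have hrow : evalM P x i ≠ 0 := fun h0 => hne (congrFun h0 k)
    exact (hx.re_mul_mul_conjTranspose_apply_self_pos hrow).ne' hgx
  exact Polynomial.eq_zero_of_ae_eval_eq_zero (mt Measure.restrict_eq_zero.mp hI) hrow

lemma exists_eq_sum_constM_mul_of_monic {Q : ℕ → MatPoly N} (hQ : ∀ n, IsMonicDeg (Q n) n) :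
    ∀ (d : ℕ) {P : MatPoly N}, (∀ k, d ≤ k → coeffM P k = 0) →
      ∃ A : ℕ → Matrix (Fin N) (Fin N) ℂ, P = ∑ m ∈ Finset.range d, constM (A m) * Q m
  | 0, P, hP => ⟨0, by simpa using eq_zero_of_coeffM_eq_zero fun k => hP k k.zero_le⟩
  | d + 1, P, hP => by
    have hlow : ∀ k, d ≤ k → coeffM (P - constM (coeffM P d) * Q d) k = 0 := by
      intro k hk
      rw [coeffM_sub, coeffM_constM_mul]
      rcases hk.eq_or_lt with rfl | hlt
      · rw [(hQ d).1, mul_one, sub_self]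
      · rw [hP k hlt, (hQ d).2 k hlt, mul_zero, sub_self]
    obtain ⟨A, hA⟩ := exists_eq_sum_constM_mul_of_monic hQ d hlow
    refine ⟨Function.update A d (coeffM P d), ?_⟩
    rw [Finset.sum_range_succ, Function.update_self,
      Finset.sum_congr rfl fun m hm => by
        rw [Function.update_of_ne (Finset.mem_range.mp hm).ne], ← hA, sub_add_cancel]

lemma MonicOPS.innerW_eq_zero_of_coeffM_eq_zero (hW : IsWeight I W) {Q : ℕ → MatPoly N}
    (hQ : MonicOPS I W Q) {n : ℕ} {P : MatPoly N} (hP : ∀ k, n ≤ k → coeffM P k = 0) :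
    innerW I W (Q n) P = 0 := by
  obtain ⟨A, rfl⟩ := exists_eq_sum_constM_mul_of_monic hQ.1 n hP
  rw [innerW_sum_right hW]
  refine Finset.sum_eq_zero fun m hm => ?_
  rw [innerW_constM_mul_right hW, hQ.2 n m (Finset.mem_range.mp hm).ne', Matrix.zero_mul]

lemma MonicOPS.unique (hW : IsWeight I W) (hI : volume I ≠ 0) {H K : ℕ → MatPoly N}
    (hH : MonicOPS I W H) (hK : MonicOPS I W K) : H = K := by
  funext n
  have hlow : ∀ k, n ≤ k → coeffM (H n - K n) k = 0 := by
    intro k hk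
    rw [coeffM_sub]
    rcases hk.eq_or_lt with rfl | hlt
    · rw [(hH.1 n).1, (hK.1 n).1, sub_self]
    · rw [(hH.1 n).2 k hlt, (hK.1 n).2 k hlt, sub_self]
  refine sub_eq_zero.mp (innerW_self_eq_zero hW hI ?_)
  rw [innerW_sub_left hW, hH.innerW_eq_zero_of_coeffM_eq_zero hW hlow,
    hK.innerW_eq_zero_of_coeffM_eq_zero hW hlow, sub_self]

end Weight

section EvenWeight

variable {W : ℝ → Matrix (Fin N) (Fin N) ℂ}

lemma innerW_reflectM (hsymm : ∀ᵐ x : ℝ, W x = W (-x)) (P Q : MatPoly N) :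
    innerW univ W (reflectM P) (reflectM Q) = innerW univ W P Q := by
  funext i j
  simp only [innerW, matInt, Measure.restrict_univ]
  rw [← integral_neg_eq_self]
  refine integral_congr_ae ?_
  filter_upwards [hsymm] with x hx
  simp only [evalM_reflectM, neg_neg, ← hx]

lemma MonicOPS.reflect (hsymm : ∀ᵐ x : ℝ, W x = W (-x)) {H : ℕ → MatPoly N}
    (hH : MonicOPS univ W H) : MonicOPS univ W fun n => (-1 : ℂ) ^ n • reflectM (H n) := by
  refine ⟨fun n => ⟨?_, fun k hk => ?_⟩, fun n m hnm => ?_⟩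
  · rw [coeffM_smul, coeffM_reflectM, (hH.1 n).1, smul_smul, ← mul_pow]
    simp
  · rw [coeffM_smul, coeffM_reflectM, (hH.1 n).2 k hk, smul_zero, smul_zero]
  · rw [innerW_smul_left, innerW_smul_right, innerW_reflectM hsymm, hH.2 n m hnm, smul_zero,
      smul_zero]

lemma MonicOPS.reflectM_eq (hW : IsWeight univ W) (hsymm : ∀ᵐ x : ℝ, W x = W (-x))
    {H : ℕ → MatPoly N} (hH : MonicOPS univ W H) (n : ℕ) :
    reflectM (H n) = (-1 : ℂ) ^ n • H n :=
  (neg_one_pow_smul_eq_iff n).mp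
    (congrFun (hH.reflect hsymm |>.unique hW (by simp) hH) n)

end EvenWeight

end MatrixPolynomial

/-- If `W(x) = W(-x)` a.e. and `D = ∑_{j=0}^s (d^j/dx^j) F_j` has the
monic orthogonal polynomials `H_n` of `W` as eigenfunctions, `H_n · D = Λ_n H_n`, then
each coefficient satisfies `F_j(-x) = (-1)^j F_j(x)`. -/
theorem stmt7 {N : ℕ} (W : ℝ → Matrix (Fin N) (Fin N) ℂ)
    (hW : IsWeight Set.univ W)
    (hsymm : ∀ᵐ x : ℝ, W x = W (-x))
    (H : ℕ → MatPoly N) (hH : MonicOPS Set.univ W H)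
    (s : ℕ) (F : ℕ → MatPoly N) (Λ : ℕ → Matrix (Fin N) (Fin N) ℂ)
    (hD : ∀ n : ℕ, applyOp s F (H n) = constM (Λ n) * H n) :
    ∀ j ≤ s, reflectM (F j) = ((-1 : ℂ) ^ j) • F j := by
  have hreflected : ∀ n, applyOp s (fun j => (-1 : ℂ) ^ j • reflectM (F j)) (H n) =
      applyOp s F (H n) := by
    intro n
    have h := congrArg reflectM (hD n)
    rw [reflectM_applyOp, reflectM_mul, reflectM_constM, hH.reflectM_eq hW hsymm, applyOp_smul,
      mul_smul_comm, ← hD n] at h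
    exact smul_right_injective _ (pow_ne_zero n (neg_ne_zero.mpr one_ne_zero)) h
  intro j hj
  exact (neg_one_pow_smul_eq_iff j).mp (eq_of_applyOp_monic_eq hH.1 hreflected j hj)
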